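/- arXiv:2005.01324 — 3 statements merged into one kernel-verified Lean document; each statement's English description precedes it below -/
import Mathlib

section
/- Let X be a spherical three-distance set in ℝ^23 whose three inner product values are −1/3, 0 and 1/3. Then |X| ≤ 2300 (indeed 2300 = h₁ + h₃ = 23 + 2277 where h_k = C(23+k−1, k) − C(23+k−3, k−2)). -/
/-! The symmetric cubes `x ↦ x ⊗ x ⊗ x` of the points of `X` live in a space of dimension
`C(n+2, 3)`, and their Gram matrix is `(⟪x, y⟫³) = G / 9 + (8 / 9) I`, where `G` is the Gram matrix
of `X`, because `t³ = t / 9` for `t ∈ {-1/3, 0, 1/3}` and `⟪x, x⟫ = 1`. As `G` is positive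
semidefinite, this matrix is positive definite, so the cubes are linearly independent and
`|X| ≤ C(25, 3) = 2300`. -/

open scoped InnerProductSpace

/-- The set of inner products between distinct points of `X`. -/
def innerProdSet {n : ℕ} (X : Finset (EuclideanSpace ℝ (Fin n))) : Set ℝ :=
  {t : ℝ | ∃ x ∈ X, ∃ y ∈ X, x ≠ y ∧ ⟪x, y⟫_ℝ = t}

/-- `X` is a spherical three-distance set in `ℝ^n`. -/
def IsSphericalThreeDistSet {n : ℕ} (X : Finset (EuclideanSpace ℝ (Fin n))) : Prop :=
  (∀ x ∈ X, ‖x‖ = 1) ∧ (innerProdSet X).ncard = 3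

/-- Dimension of the space of harmonic homogeneous polynomials of degree `k` in
`n` variables: `C(n+k−1,k) − C(n+k−3,k−2)` (second term read as `0` for `k < 2`). -/
def hdim (n k : ℕ) : ℕ :=
  (n + k - 1).choose k - if 2 ≤ k then (n + k - 3).choose (k - 2) else 0

open Finset Matrix

section SymmetricPower

variable {ι : Type*} {k : ℕ}

def symOfFn (p : Fin k → ι) : Sym ι k := ⟨univ.val.map p, by simp⟩

lemma prod_comp_eq_prod_symOfFn {R : Type*} [CommMonoid R] (a : ι → R) (p : Fin k → ι) :
    ∏ i, a (p i) = ((symOfFn p : Multiset ι).map a).prod := by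
  simp only [Finset.prod_eq_multiset_prod, symOfFn, Sym.coe_mk, Multiset.map_map]
  rfl

variable [Fintype ι] [DecidableEq ι]

def symFiberCard (m : Sym ι k) : ℕ := #{p : Fin k → ι | symOfFn p = m}

lemma sum_pow_eq_sum_sym {R : Type*} [CommSemiring R] (a : ι → R) (k : ℕ) :
    (∑ i, a i) ^ k = ∑ m : Sym ι k, (symFiberCard m : R) * ((m : Multiset ι).map a).prod := by
  rw [Fintype.sum_pow, ← sum_fiberwise univ symOfFn]
  refine sum_congr rfl fun m _ => ?_
  rw [sum_congr rfl fun p hp => by rw [prod_comp_eq_prod_symOfFn, (mem_filter.1 hp).2],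
    sum_const, nsmul_eq_mul, symFiberCard]

/-- Coordinates of `x ⊗ ⋯ ⊗ x` in the orthonormal basis of symmetrized tensors. -/
noncomputable def symPow (k : ℕ) (x : EuclideanSpace ℝ ι) : EuclideanSpace ℝ (Sym ι k) :=
  WithLp.toLp 2 fun m => √(symFiberCard m) * ((m : Multiset ι).map x).prod

lemma inner_symPow (k : ℕ) (x y : EuclideanSpace ℝ ι) :
    ⟪symPow k x, symPow k y⟫_ℝ = ⟪x, y⟫_ℝ ^ k := by
  simp only [PiLp.inner_apply, RCLike.inner_apply, conj_trivial, symPow,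
    sum_pow_eq_sum_sym, Multiset.prod_map_mul]
  refine sum_congr rfl fun m _ => ?_
  have := Real.mul_self_sqrt (Nat.cast_nonneg (α := ℝ) (symFiberCard m))
  linear_combination ((m : Multiset ι).map y).prod * ((m : Multiset ι).map x).prod * this

end SymmetricPower

lemma linearIndependent_of_gram_eq {ι E F : Type*} [Finite ι] [DecidableEq ι]
    [NormedAddCommGroup E] [InnerProductSpace ℝ E] [NormedAddCommGroup F] [InnerProductSpace ℝ F]
    {v : ι → E} {w : ι → F} {a b : ℝ} (ha : 0 ≤ a) (hb : 0 < b)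
    (h : gram ℝ w = a • gram ℝ v + b • 1) : LinearIndependent ℝ w :=
  linearIndependent_of_posDef_gram <| h ▸
    PosDef.posSemidef_add ((posSemidef_gram ℝ v).smul ha) (PosDef.one.smul hb)

lemma gram_symPow_three {ι κ : Type*} [Fintype κ] [DecidableEq κ] [DecidableEq ι]
    {v : ι → EuclideanSpace ℝ κ} (hnorm : ∀ i, ‖v i‖ = 1)
    (hinner : ∀ i j, i ≠ j → ⟪v i, v j⟫_ℝ ∈ ({-(1 / 3), 0, 1 / 3} : Set ℝ)) :
    gram ℝ (fun i => symPow 3 (v i)) = (1 / 9 : ℝ) • gram ℝ v + (8 / 9 : ℝ) • 1 := by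
  ext i j
  simp only [gram_apply, inner_symPow, Matrix.add_apply, Matrix.smul_apply, one_apply, smul_eq_mul]
  by_cases hij : i = j
  · subst hij
    rw [real_inner_self_eq_norm_sq, hnorm]
    norm_num
  · rw [if_neg hij]
    rcases hinner i j hij with h | h | h <;> rw [h] <;> norm_num

theorem card_le_choose_of_inner_mem {n : ℕ} (X : Finset (EuclideanSpace ℝ (Fin n)))
    (hnorm : ∀ x ∈ X, ‖x‖ = 1)
    (hinner : ∀ x ∈ X, ∀ y ∈ X, x ≠ y → ⟪x, y⟫_ℝ ∈ ({-(1 / 3), 0, 1 / 3} : Set ℝ)) :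
    #X ≤ (n + 2).choose 3 := by
  have hli : LinearIndependent ℝ fun x : X => symPow 3 (x : EuclideanSpace ℝ (Fin n)) :=
    linearIndependent_of_gram_eq (by norm_num) (by norm_num) <|
      gram_symPow_three (fun x => hnorm x x.2)
        fun x y hxy => hinner x x.2 y y.2 (Subtype.coe_ne_coe.2 hxy)
  simpa [Sym.card_sym_eq_choose] using hli.fintype_card_le_finrank

theorem three_dist_bound_dim23_specific (X : Finset (EuclideanSpace ℝ (Fin 23)))
    (hX : IsSphericalThreeDistSet X)
    (hD : innerProdSet X = {-(1/3 : ℝ), 0, 1/3}) :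
    X.card ≤ 2300 ∧ 2300 = hdim 23 1 + hdim 23 3 ∧ hdim 23 1 = 23 ∧ hdim 23 3 = 2277 := by
  refine ⟨?_, by decide, by decide, by decide⟩
  have hinner : ∀ x ∈ X, ∀ y ∈ X, x ≠ y → ⟪x, y⟫_ℝ ∈ ({-(1 / 3), 0, 1 / 3} : Set ℝ) :=
    fun x hx y hy hxy => hD ▸ ⟨x, hx, y, hy, hxy, rfl⟩
  exact (card_le_choose_of_inner_mem X hX.1 hinner).trans_eq (by decide)
end

section
/- Let n ≥ 2 and let X be any finite set of unit vectors in ℝ^n. Then for every natural number k, Σ_{(x,y) ∈ X×X} G_k^n(⟨x,y⟩) ≥ 0, where the sum is over all ordered pairs (including x = y). -/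
/-!
Give polynomials on `ℝⁿ` the apolar inner product `⟨p, q⟩ = ∑ α! pₐ qₐ`, for which
multiplication by `Xᵢ` is adjoint to `∂ᵢ`; hence multiplication by `⟨y, w⟩` is adjoint to the
directional derivative `∂_y`, and multiplication by `‖w‖²` to the Laplacian. For a unit vector `x`
the zonal harmonic `h_x` of degree `k` is harmonic and congruent to `⟨x, w⟩ ^ k` modulo `‖w‖²`.
Harmonic polynomials are orthogonal to `‖w‖² · ℝ[w]`, so `⟨h_x, h_y⟩ = ⟨h_x, ⟨y, w⟩ ^ k⟩`, and the
three-term recurrence of `h_x` turns this into `c_k G_k^n(⟨x, y⟩)` with `c_k > 0`. Therefore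
`∑_{x, y} G_k^n(⟨x, y⟩) = c_k⁻¹ ‖∑_x h_x‖² ≥ 0`.
-/

open scoped InnerProductSpace

/-- The Gegenbauer polynomials `G_k^n`. -/
noncomputable def Geg (n : ℕ) : ℕ → ℝ → ℝ
  | 0, _ => 1
  | 1, t => t
  | (k+2), t =>
      ((2 * ((k : ℝ) + 2) + n - 4) * t * Geg n (k+1) t - ((k : ℝ) + 1) * Geg n k t) /
        ((k : ℝ) + 2 + n - 3)

namespace MvPolynomial

open Finset
open scoped Nat

variable {R σ : Type*} [CommSemiring R]

def multiFactorial (α : σ →₀ ℕ) : ℕ := α.prod fun _ k => k !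

theorem multiFactorial_eq_mul_sub_single {α : σ →₀ ℕ} {i : σ} (hi : α i ≠ 0) :
    multiFactorial α = α i * multiFactorial (α - Finsupp.single i 1) := by
  classical
  have hfac : ∀ _ : σ, (0 : ℕ) ! = 1 := fun _ => Nat.factorial_zero
  have herase : (α - Finsupp.single i 1).erase i = α.erase i := by
    ext j
    rcases eq_or_ne j i with rfl | hj
    · simp
    · simp [Finsupp.erase_ne hj, hj.symm]
  unfold multiFactorial
  rw [← Finsupp.mul_prod_erase' α i (fun _ k => k !) hfac,
    ← Finsupp.mul_prod_erase' (α - Finsupp.single i 1) i (fun _ k => k !) hfac, herase, ← mul_assoc]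
  simp [Nat.mul_factorial_pred hi]

theorem sum_support_mul_coeff_eq_of_subset (w : (σ →₀ ℕ) → R) {p : MvPolynomial σ R}
    {s : Finset (σ →₀ ℕ)} (hs : p.support ⊆ s) (q : MvPolynomial σ R) :
    ∑ α ∈ p.support, w α * coeff α p * coeff α q = ∑ α ∈ s, w α * coeff α p * coeff α q :=
  sum_subset hs fun α _ hα => by simp [notMem_support_iff.mp hα]

variable (R σ) in
/-- The apolar (Fischer) inner product. -/
noncomputable def apolar : LinearMap.BilinForm R (MvPolynomial σ R) :=
  LinearMap.mk₂ R (fun p q => ∑ α ∈ p.support, (multiFactorial α : R) * coeff α p * coeff α q)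
    (fun p p' q => by
      classical
      rw [sum_support_mul_coeff_eq_of_subset _ (support_add (p := p) (q := p')),
        sum_support_mul_coeff_eq_of_subset _ (subset_union_left (s₁ := p.support)),
        sum_support_mul_coeff_eq_of_subset _ (subset_union_right (s₂ := p'.support)),
        ← sum_add_distrib]
      exact sum_congr rfl fun _ _ => by rw [coeff_add]; ring)
    (fun c p q => by
      rw [sum_support_mul_coeff_eq_of_subset _ (support_smul (a := c) (f := p)), smul_eq_mul,
        mul_sum]
      exact sum_congr rfl fun _ _ => by rw [coeff_smul, smul_eq_mul]; ring)
    (fun p q q' => by simp only [coeff_add, mul_add, sum_add_distrib])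
    (fun c p q => by
      simp only [coeff_smul, smul_eq_mul, mul_sum]
      exact sum_congr rfl fun _ _ => by ring)

theorem apolar_apply (p q : MvPolynomial σ R) :
    apolar R σ p q = ∑ α ∈ p.support, (multiFactorial α : R) * coeff α p * coeff α q := rfl

theorem apolar_comm (p q : MvPolynomial σ R) : apolar R σ p q = apolar R σ q p := by
  classical
  rw [apolar_apply, apolar_apply,
    sum_support_mul_coeff_eq_of_subset _ (subset_union_left (s₂ := q.support)),
    sum_support_mul_coeff_eq_of_subset _ (subset_union_right (s₁ := p.support)), union_comm]
  exact sum_congr rfl fun _ _ => by ring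

theorem apolar_monomial_left (α : σ →₀ ℕ) (a : R) (q : MvPolynomial σ R) :
    apolar R σ (monomial α a) q = multiFactorial α * a * coeff α q := by
  classical
  rw [apolar_apply, sum_support_mul_coeff_eq_of_subset _ support_monomial_subset, sum_singleton,
    coeff_monomial, if_pos rfl]

theorem apolar_one_one : apolar R σ 1 1 = 1 := by
  simpa [multiFactorial] using apolar_monomial_left (0 : σ →₀ ℕ) (1 : R) 1

theorem apolar_C_mul (c : R) (p q : MvPolynomial σ R) :
    apolar R σ (C c * p) q = c * apolar R σ p q := by
  rw [← smul_eq_C_mul, map_smul, LinearMap.smul_apply, smul_eq_mul]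

theorem apolar_X_mul (i : σ) (p q : MvPolynomial σ R) :
    apolar R σ p (X i * q) = apolar R σ (pderiv i p) q := by
  classical
  induction p using induction_on' with
  | add p p' hp hp' => simp only [map_add, LinearMap.add_apply, hp, hp']
  | monomial α a =>
    rw [apolar_monomial_left, pderiv_monomial, apolar_monomial_left, coeff_X_mul']
    by_cases hi : α i = 0
    · simp [hi]
    · rw [if_pos (Finsupp.mem_support_iff.mpr hi), multiFactorial_eq_mul_sub_single hi]
      push_cast
      ring

theorem apolar_self_nonneg {R : Type*} [CommRing R] [LinearOrder R] [IsStrictOrderedRing R]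
    (p : MvPolynomial σ R) : 0 ≤ apolar R σ p p :=
  sum_nonneg fun α _ => by
    rw [mul_assoc]
    exact mul_nonneg (Nat.cast_nonneg _) (mul_self_nonneg _)

variable [Fintype σ]

noncomputable def linearForm (v : σ → R) : MvPolynomial σ R := ∑ i, C (v i) * X i

variable (R σ) in
noncomputable def normSq : MvPolynomial σ R := ∑ i, X i ^ 2

noncomputable def dirDeriv (v : σ → R) : Derivation R (MvPolynomial σ R) (MvPolynomial σ R) :=
  ∑ i, v i • pderiv i

variable (R σ) in
noncomputable def laplacian : MvPolynomial σ R →ₗ[R] MvPolynomial σ R :=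
  ∑ i, (pderiv i).toLinearMap ∘ₗ (pderiv i).toLinearMap

theorem dirDeriv_apply (v : σ → R) (p : MvPolynomial σ R) :
    dirDeriv v p = ∑ i, C (v i) * pderiv i p := by
  rw [dirDeriv, ← Derivation.coeFnAddMonoidHom_apply, map_sum, Finset.sum_apply]
  simp [smul_eq_C_mul]

theorem dirDeriv_C (v : σ → R) (c : R) : dirDeriv v (C c) = 0 := by
  rw [← algebraMap_eq, Derivation.map_algebraMap]

theorem laplacian_apply (p : MvPolynomial σ R) :
    laplacian R σ p = ∑ i, pderiv i (pderiv i p) := by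
  simp [laplacian]

theorem pderiv_linearForm (i : σ) (v : σ → R) : pderiv i (linearForm v) = C (v i) := by
  classical
  simp [linearForm, pderiv_X, Pi.single_apply]

theorem pderiv_normSq (i : σ) : pderiv i (normSq R σ) = 2 * X i := by
  classical
  simp [normSq, pderiv_X, Pi.single_apply]

theorem dirDeriv_linearForm (v w : σ → R) : dirDeriv v (linearForm w) = C (v ⬝ᵥ w) := by
  simp [dirDeriv_apply, pderiv_linearForm, dotProduct]

theorem dirDeriv_normSq (v : σ → R) : dirDeriv v (normSq R σ) = 2 * linearForm v := by
  simp only [dirDeriv_apply, pderiv_normSq, linearForm, mul_sum]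
  exact sum_congr rfl fun _ _ => by ring

theorem dirDeriv_linearForm_pow (v w : σ → R) (k : ℕ) :
    dirDeriv v (linearForm w ^ (k + 1)) = C ((k + 1) * (v ⬝ᵥ w)) * linearForm w ^ k := by
  rw [Derivation.leibniz_pow, dirDeriv_linearForm, add_tsub_cancel_right, smul_eq_mul,
    nsmul_eq_mul, map_mul, map_add, map_natCast, map_one]
  push_cast
  ring

theorem laplacian_linearForm_mul (v : σ → R) (p : MvPolynomial σ R) :
    laplacian R σ (linearForm v * p) = 2 * dirDeriv v p + linearForm v * laplacian R σ p := by
  simp only [laplacian_apply, dirDeriv_apply, Derivation.leibniz, pderiv_linearForm, map_add,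
    smul_eq_mul, pderiv_C, mul_zero, mul_sum, ← sum_add_distrib]
  exact sum_congr rfl fun _ _ => by ring

theorem laplacian_normSq_mul_of_isHomogeneous {p : MvPolynomial σ R} {k : ℕ}
    (hp : p.IsHomogeneous k) :
    laplacian R σ (normSq R σ * p) =
      C (2 * Fintype.card σ + 4 * k : R) * p + normSq R σ * laplacian R σ p := by
  have hterm : ∀ i, pderiv i (pderiv i (normSq R σ * p)) =
      2 * p + 4 * (X i * pderiv i p) + normSq R σ * pderiv i (pderiv i p) := by
    intro i
    have h2 : pderiv i (2 : MvPolynomial σ R) = 0 := by simpa using (pderiv i).map_natCast 2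
    simp only [Derivation.leibniz, pderiv_normSq, map_add, smul_eq_mul, pderiv_X_self, h2]
    ring
  simp only [laplacian_apply, hterm, sum_add_distrib, ← mul_sum, hp.sum_X_mul_pderiv, sum_const,
    Finset.card_univ, nsmul_eq_mul, map_add, map_mul, map_natCast, map_ofNat]
  ring

theorem laplacian_C_mul (c : R) (p : MvPolynomial σ R) :
    laplacian R σ (C c * p) = C c * laplacian R σ p := by
  rw [← smul_eq_C_mul, map_smul, smul_eq_C_mul]

theorem laplacian_one : laplacian R σ 1 = 0 := by
  simp [laplacian_apply]

theorem laplacian_linearForm (v : σ → R) : laplacian R σ (linearForm v) = 0 := by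
  simp [laplacian_apply, pderiv_linearForm]

theorem laplacian_linearForm_pow (v : σ → R) (k : ℕ) :
    laplacian R σ (linearForm v ^ (k + 2)) =
      C ((k + 2) * (k + 1) * (v ⬝ᵥ v)) * linearForm v ^ k := by
  induction k with
  | zero =>
    rw [sq, laplacian_linearForm_mul, laplacian_linearForm, dirDeriv_linearForm]
    simp [map_ofNat]
  | succ k ih =>
    rw [pow_succ', laplacian_linearForm_mul, ih, dirDeriv_linearForm_pow]
    simp only [map_mul, map_add, map_natCast, map_ofNat, map_one]
    push_cast
    ring

theorem isHomogeneous_linearForm (v : σ → R) : (linearForm v).IsHomogeneous 1 :=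
  IsHomogeneous.sum _ _ _ fun i _ => isHomogeneous_C_mul_X (v i) i

theorem isHomogeneous_normSq : (normSq R σ).IsHomogeneous 2 :=
  IsHomogeneous.sum _ _ _ fun i _ => isHomogeneous_X_pow i 2

theorem apolar_linearForm_mul (v : σ → R) (p q : MvPolynomial σ R) :
    apolar R σ p (linearForm v * q) = apolar R σ (dirDeriv v p) q := by
  simp only [linearForm, sum_mul, map_sum, dirDeriv_apply, LinearMap.sum_apply,
    ← smul_eq_C_mul, smul_mul_assoc, map_smul, LinearMap.smul_apply, apolar_X_mul]

theorem apolar_normSq_mul (p q : MvPolynomial σ R) :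
    apolar R σ p (normSq R σ * q) = apolar R σ (laplacian R σ p) q := by
  simp only [normSq, sum_mul, map_sum, laplacian_apply, LinearMap.sum_apply, sq, mul_assoc,
    apolar_X_mul]

end MvPolynomial

open MvPolynomial Finset

section Zonal

noncomputable def zonalRatio (n : ℕ) : ℕ → ℝ
  | 0 => 1
  | k + 1 => (k + 2) * (k + n - 1) / (2 * k + n)

@[simp]
theorem zonalRatio_zero (n : ℕ) : zonalRatio n 0 = 1 := rfl

noncomputable def zonalConst (n k : ℕ) : ℝ := ∏ j ∈ range k, zonalRatio n j

theorem zonalConst_succ (n k : ℕ) : zonalConst n (k + 1) = zonalConst n k * zonalRatio n k :=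
  prod_range_succ _ k

noncomputable def zonalCoeff (n k : ℕ) : ℝ := zonalRatio n k / (2 * k + n)

variable {n : ℕ}

theorem zonalRatio_succ (hn : 0 < n) (k : ℕ) :
    zonalRatio n (k + 1) = 1 + zonalRatio n k - 2 * zonalCoeff n k := by
  have hn' : (0 : ℝ) < n := by exact_mod_cast hn
  rcases k with _ | k
  · simp only [zonalRatio, zonalCoeff]
    field_simp
    ring
  · simp only [zonalRatio, zonalCoeff]
    push_cast
    field_simp
    ring

theorem zonalCoeff_add_zonalCoeff_succ_mul (hn : 0 < n) (k : ℕ) :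
    zonalCoeff n k + zonalCoeff n (k + 1) * zonalRatio n k =
      zonalRatio n (k + 2) * zonalCoeff n k := by
  have hn' : (0 : ℝ) < n := by exact_mod_cast hn
  rw [zonalRatio_succ hn (k + 1), zonalCoeff, zonalCoeff]
  push_cast
  field_simp
  ring

theorem zonalCoeff_mul (hn : 0 < n) (k : ℕ) :
    zonalCoeff n k * (2 * n + 4 * k) = 2 * zonalRatio n k := by
  have hn' : (0 : ℝ) < n := by exact_mod_cast hn
  rw [zonalCoeff]
  field_simp
  ring

theorem zonalRatio_pos (hn : 2 ≤ n) (k : ℕ) : 0 < zonalRatio n k := by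
  have hn' : (2 : ℝ) ≤ n := by exact_mod_cast hn
  rcases k with _ | k
  · exact one_pos
  · have hk : (0 : ℝ) ≤ k := k.cast_nonneg
    exact div_pos (mul_pos (by linarith) (by linarith)) (by linarith)

theorem zonalConst_pos (hn : 2 ≤ n) (k : ℕ) : 0 < zonalConst n k :=
  prod_pos fun j _ => zonalRatio_pos hn j

theorem zonalRatio_succ_mul_geg (hn : 2 ≤ n) (k : ℕ) (t : ℝ) :
    zonalRatio n (k + 1) * Geg n (k + 2) t =
      (k + 2) * (t * Geg n (k + 1) t - (k + 1) / (2 * k + n) * Geg n k t) := by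
  have hn' : (2 : ℝ) ≤ n := by exact_mod_cast hn
  have hk : (0 : ℝ) ≤ k := k.cast_nonneg
  have h1 : (2 * k + n : ℝ) ≠ 0 := by linarith
  have h2 : (k + 2 + n - 3 : ℝ) ≠ 0 := by linarith
  rw [zonalRatio, Geg]
  field_simp
  ring

variable {σ : Type*} [Fintype σ]

/-- For `x ⬝ᵥ x = 1`, a multiple of the zonal harmonic of degree `k` with pole `x`; the
coefficient `zonalCoeff` is the one that keeps it harmonic. -/
noncomputable def zonal (x : σ → ℝ) : ℕ → MvPolynomial σ ℝ
  | 0 => 1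
  | 1 => linearForm x
  | k + 2 => linearForm x * zonal x (k + 1) -
      C (zonalCoeff (Fintype.card σ) k) * (normSq ℝ σ * zonal x k)

theorem isHomogeneous_zonal (x : σ → ℝ) (k : ℕ) : (zonal x k).IsHomogeneous k := by
  induction k using Nat.twoStepInduction with
  | zero => exact isHomogeneous_one σ ℝ
  | one => exact isHomogeneous_linearForm x
  | more k ih₀ ih₁ =>
    have hdeg₁ : 1 + (k + 1) = k + 2 := by omega
    have hdeg₀ : 2 + k = k + 2 := by omega
    rw [zonal]
    exact (hdeg₁ ▸ (isHomogeneous_linearForm x).mul ih₁).sub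
      (hdeg₀ ▸ (isHomogeneous_normSq.mul ih₀).C_mul _)

theorem zonal_eq_linearForm_pow_add (x : σ → ℝ) (k : ℕ) :
    ∃ r, zonal x k = linearForm x ^ k + normSq ℝ σ * r := by
  induction k using Nat.twoStepInduction with
  | zero => exact ⟨0, by simp [zonal]⟩
  | one => exact ⟨0, by simp [zonal]⟩
  | more k _ ih₁ =>
    obtain ⟨r, hr⟩ := ih₁
    exact ⟨linearForm x * r - C (zonalCoeff (Fintype.card σ) k) * zonal x k, by
      rw [zonal, hr]; ring⟩

theorem dirDeriv_zonal (hσ : 0 < Fintype.card σ) {x : σ → ℝ} (hx : x ⬝ᵥ x = 1) (k : ℕ) :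
    dirDeriv x (zonal x (k + 1)) = C (zonalRatio (Fintype.card σ) k) * zonal x k := by
  induction k using Nat.twoStepInduction with
  | zero => simp [zonal, dirDeriv_linearForm, hx]
  | one =>
    have h := congrArg (C : ℝ → MvPolynomial σ ℝ) (zonalRatio_succ hσ 0)
    simp only [zero_add, zonalRatio_zero, map_sub, map_add, map_mul, map_one, map_ofNat] at h
    simp only [zonal, map_sub, Derivation.leibniz, smul_eq_mul, dirDeriv_linearForm, hx,
      dirDeriv_normSq, dirDeriv_C, Derivation.map_one_eq_zero, map_one]
    linear_combination (-linearForm x) * h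
  | more k ih₀ ih₁ =>
    have h₁ := congrArg (C : ℝ → MvPolynomial σ ℝ) (zonalRatio_succ hσ (k + 1))
    have h₂ := congrArg (C : ℝ → MvPolynomial σ ℝ) (zonalCoeff_add_zonalCoeff_succ_mul hσ k)
    simp only [map_sub, map_add, map_mul, map_one, map_ofNat] at h₁ h₂
    have hz : zonal x (k + 2) = linearForm x * zonal x (k + 1) -
        C (zonalCoeff (Fintype.card σ) k) * (normSq ℝ σ * zonal x k) := by rw [zonal]
    rw [show k + 2 + 1 = k + 1 + 2 from rfl, zonal]
    simp only [map_sub, Derivation.leibniz, smul_eq_mul, dirDeriv_linearForm, hx, dirDeriv_normSq,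
      dirDeriv_C, map_one, ih₀, ih₁]
    linear_combination (1 - C (zonalRatio (Fintype.card σ) (k + 2))) * hz -
      linearForm x * zonal x (k + 1) * h₁ - normSq ℝ σ * zonal x k * h₂

theorem laplacian_zonal (hσ : 0 < Fintype.card σ) {x : σ → ℝ} (hx : x ⬝ᵥ x = 1) (k : ℕ) :
    laplacian ℝ σ (zonal x k) = 0 := by
  induction k using Nat.twoStepInduction with
  | zero => exact laplacian_one
  | one => exact laplacian_linearForm x
  | more k ih₀ ih₁ =>
    have h := congrArg (C : ℝ → MvPolynomial σ ℝ) (zonalCoeff_mul hσ k)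
    simp only [map_mul, map_ofNat] at h
    rw [zonal, map_sub, laplacian_linearForm_mul, laplacian_C_mul,
      laplacian_normSq_mul_of_isHomogeneous (isHomogeneous_zonal x k), dirDeriv_zonal hσ hx, ih₀,
      ih₁]
    linear_combination (-zonal x k) * h

theorem apolar_zonal_linearForm_pow (hσ : 2 ≤ Fintype.card σ) (x : σ → ℝ) {y : σ → ℝ}
    (hy : y ⬝ᵥ y = 1) (k : ℕ) :
    apolar ℝ σ (zonal x k) (linearForm y ^ k) =
      zonalConst (Fintype.card σ) k * Geg (Fintype.card σ) k (x ⬝ᵥ y) := by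
  induction k using Nat.twoStepInduction with
  | zero => simp [zonal, zonalConst, apolar_one_one, Geg]
  | one =>
    rw [zonal, pow_one, ← mul_one (linearForm y), apolar_linearForm_mul, dirDeriv_linearForm,
      ← mul_one (C _), apolar_C_mul, apolar_one_one]
    simp [zonalConst, Geg, dotProduct_comm]
  | more k ih₀ ih₁ =>
    have h₁ : apolar ℝ σ (linearForm x * zonal x (k + 1)) (linearForm y ^ (k + 2)) =
        (k + 2) * (x ⬝ᵥ y) * apolar ℝ σ (zonal x (k + 1)) (linearForm y ^ (k + 1)) := by
      rw [apolar_comm, apolar_linearForm_mul, dirDeriv_linearForm_pow, apolar_C_mul, apolar_comm]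
      push_cast
      ring
    have h₀ : apolar ℝ σ (normSq ℝ σ * zonal x k) (linearForm y ^ (k + 2)) =
        (k + 2) * (k + 1) * apolar ℝ σ (zonal x k) (linearForm y ^ k) := by
      rw [apolar_comm, apolar_normSq_mul, laplacian_linearForm_pow, hy, apolar_C_mul, apolar_comm,
        mul_one]
    rw [zonal, map_sub, LinearMap.sub_apply, apolar_C_mul, h₁, h₀, ih₀, ih₁, zonalCoeff]
    simp only [zonalConst_succ]
    linear_combination (-(zonalConst (Fintype.card σ) k * zonalRatio (Fintype.card σ) k)) *
      zonalRatio_succ_mul_geg hσ k (x ⬝ᵥ y)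

theorem apolar_zonal_zonal (hσ : 2 ≤ Fintype.card σ) {x y : σ → ℝ} (hx : x ⬝ᵥ x = 1)
    (hy : y ⬝ᵥ y = 1) (k : ℕ) :
    apolar ℝ σ (zonal x k) (zonal y k) =
      zonalConst (Fintype.card σ) k * Geg (Fintype.card σ) k (x ⬝ᵥ y) := by
  obtain ⟨r, hr⟩ := zonal_eq_linearForm_pow_add y k
  rw [hr, map_add, apolar_normSq_mul, laplacian_zonal (by omega) hx, map_zero,
    LinearMap.zero_apply, add_zero, apolar_zonal_linearForm_pow hσ x hy]

end Zonal

theorem sum_sum_geg_dotProduct_nonneg {σ ι : Type*} [Fintype σ] (hσ : 2 ≤ Fintype.card σ)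
    (s : Finset ι) (v : ι → σ → ℝ) (hv : ∀ i ∈ s, v i ⬝ᵥ v i = 1) (k : ℕ) :
    0 ≤ ∑ i ∈ s, ∑ j ∈ s, Geg (Fintype.card σ) k (v i ⬝ᵥ v j) := by
  set H := ∑ i ∈ s, zonal (v i) k
  have hH : apolar ℝ σ H H =
      zonalConst (Fintype.card σ) k * ∑ i ∈ s, ∑ j ∈ s, Geg (Fintype.card σ) k (v i ⬝ᵥ v j) := by
    simp only [H, map_sum, LinearMap.sum_apply, mul_sum]
    exact sum_congr rfl fun i hi => sum_congr rfl fun j hj =>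
      (apolar_comm _ _).trans (apolar_zonal_zonal hσ (hv i hi) (hv j hj) k)
  exact (mul_nonneg_iff_of_pos_left (zonalConst_pos hσ k)).mp (hH ▸ apolar_self_nonneg H)

/-- Delsarte's inequality: for any finite set of unit vectors in `ℝ^n`,
the full (ordered) pair sum of any Gegenbauer polynomial of the inner products
is nonnegative. -/
theorem delsarte_inequality (n : ℕ) (hn : 2 ≤ n)
    (X : Finset (EuclideanSpace ℝ (Fin n))) (hX : ∀ x ∈ X, ‖x‖ = 1) (k : ℕ) :
    0 ≤ ∑ x ∈ X, ∑ y ∈ X, Geg n k ⟪x, y⟫_ℝ := by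
  have hunit : ∀ x ∈ X, x.ofLp ⬝ᵥ x.ofLp = 1 := fun x hx => by
    have h := real_inner_self_eq_norm_sq x
    rw [hX x hx, EuclideanSpace.inner_eq_star_dotProduct] at h
    simpa using h
  simpa [EuclideanSpace.inner_eq_star_dotProduct, dotProduct_comm] using
    sum_sum_geg_dotProduct_nonneg (by simpa using hn) X (fun x => x.ofLp) hunit k
end

section
/- Let d₁, d₂, d₃ be real numbers with −1 ≤ d₁ < d₂ < d₃ < 1, define K₁, K₂, K₃ as the Lagrange-type quotients, and assume K₁ + K₂ ≠ 0. Then −K₁K₂K₃ > 0 and d₁ = (K₁ − d₃K₁K₃ − (d₃−1)√(−K₁K₂K₃)) / (K₁(K₁+K₂)) and d₂ = (K₂ − d₃K₂K₃ + (d₃−1)√(−K₁K₂K₃)) / (K₂(K₁+K₂)). -/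
/-!
The key observation is that `-K₁K₂K₃` is a perfect square: it equals `Q²` with
`Q = (1 - d₁)(1 - d₂)(1 - d₃) / ((d₂ - d₁)(d₃ - d₁)(d₃ - d₂))` (`vandermondeQuot` below),
and `Q > 0` when `d₁ < d₂ < d₃ < 1`. So the square root is `Q` itself, and both formulas
become rational identities in `d₁, d₂, d₃` that hold for any pairwise distinct values.
-/

/-- Lagrange-type quotient `K₁`. -/
noncomputable def K₁ (d₁ d₂ d₃ : ℝ) : ℝ := (d₂ - 1) * (d₃ - 1) / ((d₂ - d₁) * (d₃ - d₁))

/-- Lagrange-type quotient `K₂`. -/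
noncomputable def K₂ (d₁ d₂ d₃ : ℝ) : ℝ := (d₁ - 1) * (d₃ - 1) / ((d₁ - d₂) * (d₃ - d₂))

/-- Lagrange-type quotient `K₃`. -/
noncomputable def K₃ (d₁ d₂ d₃ : ℝ) : ℝ := (d₁ - 1) * (d₂ - 1) / ((d₁ - d₃) * (d₂ - d₃))

noncomputable def vandermondeQuot (d₁ d₂ d₃ : ℝ) : ℝ :=
  (1 - d₁) * (1 - d₂) * (1 - d₃) / ((d₂ - d₁) * (d₃ - d₁) * (d₃ - d₂))

section

variable {d₁ d₂ d₃ : ℝ}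

theorem vandermondeQuot_pos (h₁₂ : d₁ < d₂) (h₂₃ : d₂ < d₃) (h₃ : d₃ < 1) :
    0 < vandermondeQuot d₁ d₂ d₃ := by
  unfold vandermondeQuot
  exact div_pos (mul_pos (mul_pos (by linarith) (by linarith)) (by linarith))
    (mul_pos (mul_pos (by linarith) (by linarith)) (by linarith))

theorem K₁_ne_zero (h₁₂ : d₁ ≠ d₂) (h₁₃ : d₁ ≠ d₃) (h₂ : d₂ ≠ 1) (h₃ : d₃ ≠ 1) :
    K₁ d₁ d₂ d₃ ≠ 0 := by
  unfold K₁
  simp [sub_eq_zero, h₁₂.symm, h₁₃.symm, h₂, h₃]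

theorem K₂_ne_zero (h₁₂ : d₁ ≠ d₂) (h₂₃ : d₂ ≠ d₃) (h₁ : d₁ ≠ 1) (h₃ : d₃ ≠ 1) :
    K₂ d₁ d₂ d₃ ≠ 0 := by
  unfold K₂
  simp [sub_eq_zero, h₁₂, h₂₃.symm, h₁, h₃]

theorem neg_K₁_mul_K₂_mul_K₃ (h₁₂ : d₁ ≠ d₂) (h₁₃ : d₁ ≠ d₃) (h₂₃ : d₂ ≠ d₃) :
    -(K₁ d₁ d₂ d₃ * K₂ d₁ d₂ d₃ * K₃ d₁ d₂ d₃) = vandermondeQuot d₁ d₂ d₃ ^ 2 := by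
  unfold K₁ K₂ K₃ vandermondeQuot
  field_simp
  ring

theorem K₁_mul_K₁_add_K₂_mul_d₁ (h₁₂ : d₁ ≠ d₂) (h₁₃ : d₁ ≠ d₃) (h₂₃ : d₂ ≠ d₃) :
    K₁ d₁ d₂ d₃ * (K₁ d₁ d₂ d₃ + K₂ d₁ d₂ d₃) * d₁ =
      K₁ d₁ d₂ d₃ - d₃ * K₁ d₁ d₂ d₃ * K₃ d₁ d₂ d₃ - (d₃ - 1) * vandermondeQuot d₁ d₂ d₃ := by
  unfold K₁ K₂ K₃ vandermondeQuot
  field_simp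
  ring

theorem K₂_mul_K₁_add_K₂_mul_d₂ (h₁₂ : d₁ ≠ d₂) (h₁₃ : d₁ ≠ d₃) (h₂₃ : d₂ ≠ d₃) :
    K₂ d₁ d₂ d₃ * (K₁ d₁ d₂ d₃ + K₂ d₁ d₂ d₃) * d₂ =
      K₂ d₁ d₂ d₃ - d₃ * K₂ d₁ d₂ d₃ * K₃ d₁ d₂ d₃ + (d₃ - 1) * vandermondeQuot d₁ d₂ d₃ := by
  unfold K₁ K₂ K₃ vandermondeQuot
  field_simp
  ring

theorem sqrt_neg_K₁_mul_K₂_mul_K₃ (h₁₂ : d₁ < d₂) (h₂₃ : d₂ < d₃) (h₃ : d₃ < 1) :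
    √(-(K₁ d₁ d₂ d₃ * K₂ d₁ d₂ d₃ * K₃ d₁ d₂ d₃)) = vandermondeQuot d₁ d₂ d₃ := by
  rw [neg_K₁_mul_K₂_mul_K₃ h₁₂.ne (h₁₂.trans h₂₃).ne h₂₃.ne,
    Real.sqrt_sq (vandermondeQuot_pos h₁₂ h₂₃ h₃).le]

end

theorem d₁_d₂_formula_general (d₁ d₂ d₃ : ℝ)
    (h₁₂ : d₁ < d₂) (h₂₃ : d₂ < d₃) (h₃ : d₃ < 1)
    (hK : K₁ d₁ d₂ d₃ + K₂ d₁ d₂ d₃ ≠ 0) :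
    0 < -(K₁ d₁ d₂ d₃ * K₂ d₁ d₂ d₃ * K₃ d₁ d₂ d₃) ∧
    d₁ = (K₁ d₁ d₂ d₃ - d₃ * K₁ d₁ d₂ d₃ * K₃ d₁ d₂ d₃ -
          (d₃ - 1) * Real.sqrt (-(K₁ d₁ d₂ d₃ * K₂ d₁ d₂ d₃ * K₃ d₁ d₂ d₃))) /
        (K₁ d₁ d₂ d₃ * (K₁ d₁ d₂ d₃ + K₂ d₁ d₂ d₃)) ∧
    d₂ = (K₂ d₁ d₂ d₃ - d₃ * K₂ d₁ d₂ d₃ * K₃ d₁ d₂ d₃ +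
          (d₃ - 1) * Real.sqrt (-(K₁ d₁ d₂ d₃ * K₂ d₁ d₂ d₃ * K₃ d₁ d₂ d₃))) /
        (K₂ d₁ d₂ d₃ * (K₁ d₁ d₂ d₃ + K₂ d₁ d₂ d₃)) := by
  have h₁₃ : d₁ < d₃ := h₁₂.trans h₂₃
  have h₂ : d₂ < 1 := h₂₃.trans h₃
  have h₁ : d₁ < 1 := h₁₂.trans h₂
  refine ⟨?_, ?_, ?_⟩
  · rw [neg_K₁_mul_K₂_mul_K₃ h₁₂.ne h₁₃.ne h₂₃.ne]
    exact pow_pos (vandermondeQuot_pos h₁₂ h₂₃ h₃) 2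
  · rw [sqrt_neg_K₁_mul_K₂_mul_K₃ h₁₂ h₂₃ h₃,
      eq_div_iff (mul_ne_zero (K₁_ne_zero h₁₂.ne h₁₃.ne h₂.ne h₃.ne) hK), mul_comm,
      K₁_mul_K₁_add_K₂_mul_d₁ h₁₂.ne h₁₃.ne h₂₃.ne]
  · rw [sqrt_neg_K₁_mul_K₂_mul_K₃ h₁₂ h₂₃ h₃,
      eq_div_iff (mul_ne_zero (K₂_ne_zero h₁₂.ne h₂₃.ne h₁.ne h₃.ne) hK), mul_comm,
      K₂_mul_K₁_add_K₂_mul_d₂ h₁₂.ne h₁₃.ne h₂₃.ne]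

theorem d₁_d₂_formula (d₁ d₂ d₃ : ℝ)
    (h₁ : -1 ≤ d₁) (h₁₂ : d₁ < d₂) (h₂₃ : d₂ < d₃) (h₃ : d₃ < 1)
    (hK : K₁ d₁ d₂ d₃ + K₂ d₁ d₂ d₃ ≠ 0) :
    0 < -(K₁ d₁ d₂ d₃ * K₂ d₁ d₂ d₃ * K₃ d₁ d₂ d₃) ∧
    d₁ = (K₁ d₁ d₂ d₃ - d₃ * K₁ d₁ d₂ d₃ * K₃ d₁ d₂ d₃ -
          (d₃ - 1) * Real.sqrt (-(K₁ d₁ d₂ d₃ * K₂ d₁ d₂ d₃ * K₃ d₁ d₂ d₃))) /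
        (K₁ d₁ d₂ d₃ * (K₁ d₁ d₂ d₃ + K₂ d₁ d₂ d₃)) ∧
    d₂ = (K₂ d₁ d₂ d₃ - d₃ * K₂ d₁ d₂ d₃ * K₃ d₁ d₂ d₃ +
          (d₃ - 1) * Real.sqrt (-(K₁ d₁ d₂ d₃ * K₂ d₁ d₂ d₃ * K₃ d₁ d₂ d₃))) /
        (K₂ d₁ d₂ d₃ * (K₁ d₁ d₂ d₃ + K₂ d₁ d₂ d₃)) :=
  d₁_d₂_formula_general d₁ d₂ d₃ h₁₂ h₂₃ h₃ hK
end
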